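/- arXiv:1910.09610 — 2 statements merged into one kernel-verified Lean document; each statement's English description precedes it below -/
import Mathlib

section
/- Let R be a commutative ring, A a subring of R, g₁, …, g_n ∈ A and m₁, …, m_n ∈ R. Suppose there exist natural numbers q and s such that: (i) every product of q + 1 elements taken from the list m₁, …, m_n (with repetitions allowed) equals 0; and (ii) (g₁ · g₂ ⋯ g_n)^s · m_i ∈ A for each i. Then there exists a positive integer p such that for all integers r₁, …, r_n ≥ p the product (g₁ + m₁)^{r₁} · (g₂ + m₂)^{r₂} ⋯ (g_n + m_n)^{r_n} lies in A. -/
/-- Let `R` be a commutative ring, `A` a subring, `g₁, …, g_n ∈ A` and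
`m₁, …, m_n ∈ R`.  Suppose every product of `q + 1` of the `m_i` (with
repetitions) vanishes, and `(g₁ ⋯ g_n)^s * m_i ∈ A` for each `i`.  Then there
is a positive integer `p` such that `(g₁ + m₁)^{r₁} ⋯ (g_n + m_n)^{r_n} ∈ A`
whenever all `r_i ≥ p`. -/
theorem stmt_8 {R : Type*} [CommRing R] (A : Subring R) (n : ℕ)
    (g m : Fin n → R) (hg : ∀ i, g i ∈ A) (q s : ℕ)
    (hq : ∀ f : Fin (q + 1) → Fin n, ∏ j, m (f j) = 0)
    (hs : ∀ i, (∏ j, g j) ^ s * m i ∈ A) :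
    ∃ p : ℕ, 0 < p ∧ ∀ r : Fin n → ℕ, (∀ i, p ≤ r i) →
      (∏ i, (g i + m i) ^ r i) ∈ A := by
  set G := ∏ j, g j with hG
  -- any product of at least q+1 of the m's vanishes
  have hq' : ∀ (t : ℕ), q + 1 ≤ t → ∀ f : Fin t → Fin n, ∏ j, m (f j) = 0 := by
    intro t ht f
    obtain ⟨d, rfl⟩ := Nat.exists_eq_add_of_le ht
    rw [Fin.prod_univ_add, hq fun j => f (Fin.castAdd d j), zero_mul]
  -- any monomial in the m's of total degree ≥ q+1 vanishes
  have hk0 : ∀ k : Fin n → ℕ, q + 1 ≤ ∑ i, k i → ∏ i, m i ^ k i = 0 := by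
    intro k hk
    set L : List (Fin n) := (List.ofFn fun i => List.replicate (k i) i).flatten with hL
    have hlen : L.length = ∑ i, k i := by
      simp [hL, List.length_flatten, Function.comp, List.sum_ofFn]
    have h1 : (L.map m).prod = ∏ i, m i ^ k i := by
      simp [hL, List.map_flatten, List.prod_flatten, Function.comp, List.map_replicate,
        List.prod_replicate, List.prod_ofFn]
    have h2 : (L.map m).prod = ∏ i : Fin L.length, m L[i.1] :=
      (Fin.prod_univ_fun_getElem L m).symm
    rw [← h1, h2]
    exact hq' L.length (hlen ▸ hk) fun i => L[i.1]
  refine ⟨q + s * q + 1, Nat.succ_pos _, ?_⟩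
  intro r hr
  have expand : ∏ i, (g i + m i) ^ r i
      = ∑ k ∈ Fintype.piFinset (fun i => Finset.range (r i + 1)),
          ∏ i, (m i ^ k i * g i ^ (r i - k i) * ((r i).choose (k i) : R)) := by
    calc ∏ i, (g i + m i) ^ r i
        = ∏ i, ∑ j ∈ Finset.range (r i + 1),
            m i ^ j * g i ^ (r i - j) * ((r i).choose j : R) :=
          Finset.prod_congr rfl fun i _ => by rw [add_comm (g i), add_pow]
      _ = _ := Finset.prod_univ_sum _ _
  rw [expand]
  refine Subring.sum_mem A fun k _ => ?_
  by_cases hK : q + 1 ≤ ∑ i, k i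
  · have : ∏ i, (m i ^ k i * g i ^ (r i - k i) * ((r i).choose (k i) : R)) = 0 := by
      rw [Finset.prod_mul_distrib, Finset.prod_mul_distrib, hk0 k hK, zero_mul, zero_mul]
    rw [this]; exact Subring.zero_mem A
  · push_neg at hK
    set K := ∑ i, k i with hKdef
    have hKq : K ≤ q := Nat.lt_succ_iff.mp hK
    have hki : ∀ i, k i ≤ K := fun i =>
      Finset.single_le_sum (fun j _ => Nat.zero_le (k j)) (Finset.mem_univ i)
    have hle : ∀ i, s * K + k i ≤ r i := by
      intro i
      calc s * K + k i ≤ s * q + q := by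
            exact Nat.add_le_add (Nat.mul_le_mul_left s hKq) ((hki i).trans hKq)
        _ ≤ q + s * q + 1 := by omega
        _ ≤ r i := hr i
    have key : ∏ i, (m i ^ k i * g i ^ (r i - k i) * ((r i).choose (k i) : R))
        = (∏ i, ((r i).choose (k i) : R) * g i ^ (r i - k i - s * K))
          * ∏ i, (G ^ s * m i) ^ k i := by
      symm
      calc (∏ i, ((r i).choose (k i) : R) * g i ^ (r i - k i - s * K))
            * ∏ i, (G ^ s * m i) ^ k i
          = (∏ i, ((r i).choose (k i) : R) * g i ^ (r i - k i - s * K))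
            * ((G ^ s) ^ K * ∏ i, m i ^ k i) := by
            congr 1
            simp only [mul_pow]
            rw [Finset.prod_mul_distrib, Finset.prod_pow_eq_pow_sum]
        _ = (∏ i, ((r i).choose (k i) : R) * g i ^ (r i - k i - s * K))
            * ((∏ i, g i ^ (s * K)) * ∏ i, m i ^ k i) := by
            rw [Finset.prod_pow, ← hG, ← pow_mul]
        _ = ∏ i, (((r i).choose (k i) : R) * g i ^ (r i - k i - s * K)
            * (g i ^ (s * K) * m i ^ k i)) := by
            simp only [Finset.prod_mul_distrib]
        _ = ∏ i, (m i ^ k i * g i ^ (r i - k i) * ((r i).choose (k i) : R)) := by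
            refine Finset.prod_congr rfl fun i _ => ?_
            have h1 : s * K ≤ r i - k i := Nat.le_sub_of_add_le (hle i)
            have h2 : g i ^ (r i - k i - s * K) * g i ^ (s * K) = g i ^ (r i - k i) := by
              rw [← pow_add, Nat.sub_add_cancel h1]
            calc ((r i).choose (k i) : R) * g i ^ (r i - k i - s * K)
                  * (g i ^ (s * K) * m i ^ k i)
                = g i ^ (r i - k i - s * K) * g i ^ (s * K)
                  * m i ^ k i * ((r i).choose (k i) : R) := by ring
              _ = m i ^ k i * g i ^ (r i - k i) * ((r i).choose (k i) : R) := by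
                  rw [h2]; ring
    rw [key]
    refine Subring.mul_mem A ?_ ?_
    · exact Subring.prod_mem A fun i _ =>
        Subring.mul_mem A (natCast_mem A _) (Subring.pow_mem A (hg i) _)
    · exact Subring.prod_mem A fun i _ => Subring.pow_mem A (hs i) _
end

section
/- Let A be a commutative local ℂ-algebra with maximal ideal m such that the composite map ℂ → A → A/m is an isomorphism (i.e. the residue field of A is ℂ). If the module of Kähler differentials Ω_{A/ℂ} is a free A-module, then the canonical ℂ-linear map from the ℂ-derivations Der_ℂ(A, A) to the dual space Hom_ℂ(m/m², ℂ) — sending a derivation D to the functional induced on m/m² by f ↦ D(f) mod m — is surjective. -/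
/-- Let `A` be a commutative local `ℂ`-algebra whose residue field is `ℂ`
(i.e. the composite `ℂ → A → A/m` is an isomorphism).  If the module of Kähler
differentials `Ω[A⁄ℂ]` is a free `A`-module, then the canonical map from
`ℂ`-derivations of `A` to `Hom_ℂ(m/m², ℂ)` is surjective: every `ℂ`-linear
functional `φ` on `m/m²` is induced by some derivation `D`, in the sense that
`D f ≡ algebraMap ℂ A (φ [f]) mod m` for all `f ∈ m`. -/
theorem stmt_9 {A : Type*} [CommRing A] [IsLocalRing A] [Algebra ℂ A]
    (hres : Function.Bijective
      ((Ideal.Quotient.mk (IsLocalRing.maximalIdeal A)).comp (algebraMap ℂ A)))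
    (hfree : Module.Free A (Ω[A⁄ℂ])) :
    ∀ φ : (IsLocalRing.maximalIdeal A).Cotangent →ₗ[ℂ] ℂ,
      ∃ D : Derivation ℂ A A, ∀ f : (IsLocalRing.maximalIdeal A),
        Ideal.Quotient.mk (IsLocalRing.maximalIdeal A) (D f) =
          Ideal.Quotient.mk (IsLocalRing.maximalIdeal A)
            (algebraMap ℂ A (φ ((IsLocalRing.maximalIdeal A).toCotangent f))) := by
  intro φ
  let m : Ideal A := IsLocalRing.maximalIdeal A
  let res : A →+* A ⧸ m := Ideal.Quotient.mk m
  let σ : ℂ →+* A := algebraMap ℂ A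
  let e : ℂ ≃+* A ⧸ m := RingEquiv.ofBijective (res.comp σ) hres
  let ν : A →+* ℂ := (e.symm : A ⧸ m →+* ℂ).comp res
  have he : ∀ c : ℂ, e c = res (σ c) := fun c => rfl
  have hν : ∀ a : A, res (σ (ν a)) = res a := by
    intro a
    have : e (ν a) = res a := e.apply_symm_apply (res a)
    simpa [he] using this
  have hσν : ∀ a : A, a - σ (ν a) ∈ m := by
    intro a
    have := hν a
    rwa [Ideal.Quotient.mk_eq_mk_iff_sub_mem, ← neg_sub, neg_mem_iff] at this
  let el : A → m := fun a => ⟨a - σ (ν a), hσν a⟩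
  -- the canonical derivation A → m/m²
  let D₀ : Derivation ℂ A m.Cotangent :=
  { toFun := fun a => m.toCotangent (el a)
    map_add' := fun a b => by
      have h : el (a + b) = el a + el b := Subtype.ext (by
        show (a + b) - σ (ν (a + b)) = (a - σ (ν a)) + (b - σ (ν b))
        rw [map_add, map_add]; ring)
      show m.toCotangent (el (a + b)) = m.toCotangent (el a) + m.toCotangent (el b)
      rw [h, map_add]
    map_smul' := fun c a => by
      have hel : el (c • a) = c • el a := Subtype.ext (by
        show (c • a) - σ (ν (c • a)) = (c • ((a - σ (ν a) : A) : A))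
        have h1 : (c • a : A) = σ c * a := Algebra.smul_def c a
        have h2 : ν (c • a) = c * ν a := by
          rw [h1, map_mul]
          congr 1
          show e.symm (res (σ c)) = c
          rw [← he, e.symm_apply_apply]
        rw [h2, h1, map_mul, Algebra.smul_def]
        show σ c * a - σ c * σ (ν a) = σ c * (a - σ (ν a))
        ring)
      show m.toCotangent (el (c • a)) = c • m.toCotangent (el a)
      rw [hel, LinearMap.map_smul_of_tower]
    map_one_eq_zero' := by
      have : el 1 = 0 := Subtype.ext (by
        show (1 : A) - σ (ν 1) = 0
        rw [map_one, map_one, sub_self])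
      show m.toCotangent (el 1) = 0
      rw [this, map_zero]
    leibniz' := fun a b => by
      show m.toCotangent (el (a * b)) = a • m.toCotangent (el b) + b • m.toCotangent (el a)
      rw [← LinearMap.map_smul, ← LinearMap.map_smul, ← map_add, Ideal.toCotangent_eq]
      have : ((el (a * b) : A)) - ((a • el b + b • el a : m) : A) = -((el a : A) * (el b : A)) := by
        push_cast
        show (a * b - σ (ν (a * b))) - (a • ((b - σ (ν b) : A)) + b • ((a - σ (ν a) : A)))
            = -((a - σ (ν a)) * (b - σ (ν b)))
        rw [map_mul, map_mul, smul_eq_mul, smul_eq_mul]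
        ring
      rw [this, pow_two]
      exact neg_mem (Ideal.mul_mem_mul (el a).2 (el b).2) }
  let L : Ω[A⁄ℂ] →ₗ[A] m.Cotangent := D₀.liftKaehlerDifferential
  have hL : ∀ a : A, L (KaehlerDifferential.D ℂ A a) = m.toCotangent (el a) :=
    D₀.liftKaehlerDifferential_comp_D
  let b := Module.Free.chooseBasis A (Ω[A⁄ℂ])
  let T : Ω[A⁄ℂ] →ₗ[A] A := b.constr ℂ (fun i => σ (φ (L (b i))))
  -- the action of m on the cotangent space vanishes
  have hsmul : ∀ (a : A) (y : m.Cotangent), a • y = σ (ν a) • y := by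
    intro a y
    obtain ⟨z, rfl⟩ := m.toCotangent_surjective y
    rw [← LinearMap.map_smul, ← LinearMap.map_smul, Ideal.toCotangent_eq]
    have : ((a • z : m) : A) - ((σ (ν a) • z : m) : A) = (a - σ (ν a)) * (z : A) := by
      push_cast
      rw [smul_eq_mul, smul_eq_mul, sub_mul]
    rw [this, pow_two]
    exact Ideal.mul_mem_mul (hσν a) z.2
  -- the A-linear map Ω → A/m given by e ∘ φ ∘ L
  let h2 : Ω[A⁄ℂ] →ₗ[A] A ⧸ m :=
  { toFun := fun x => e (φ (L x))
    map_add' := fun x y => by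
      show e (φ (L (x + y))) = e (φ (L x)) + e (φ (L y))
      rw [map_add, map_add, map_add]
    map_smul' := fun a x => by
      show e (φ (L (a • x))) = a • e (φ (L x))
      rw [LinearMap.map_smul, hsmul a (L x), algebraMap_smul, LinearMap.map_smul,
        smul_eq_mul, map_mul]
      have h3 : e (ν a) = res a := e.apply_symm_apply (res a)
      rw [h3]
      rw [Algebra.smul_def, Ideal.Quotient.algebraMap_eq] }
  have hT : ∀ x : Ω[A⁄ℂ], res (T x) = e (φ (L x)) := by
    have h : m.mkQ ∘ₗ T = h2 := by
      apply b.ext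
      intro i
      show res (T (b i)) = e (φ (L (b i)))
      rw [show T (b i) = σ (φ (L (b i))) from b.constr_basis ℂ _ i, ← he]
    intro x
    exact congrArg (fun F => F x) (congrArg DFunLike.coe h)
  refine ⟨T.compDer (KaehlerDifferential.D ℂ A), fun f => ?_⟩
  have hνf : ν (f : A) = 0 := by
    show e.symm (res (f : A)) = 0
    rw [show res (f : A) = 0 from Ideal.Quotient.eq_zero_iff_mem.mpr f.2, map_zero]
  have helf : el (f : A) = f := Subtype.ext (by
    show (f : A) - σ (ν (f : A)) = (f : A)
    rw [hνf, map_zero, sub_zero])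
  change res (T (KaehlerDifferential.D ℂ A (f : A))) = res (σ (φ (m.toCotangent f)))
  rw [hT, hL, helf, ← he]
end
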